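/- Let X = AS be an ICA model in ℝⁿ where each Sᵢ is symmetrically distributed with E|Sᵢ| = 1 and E(|Sᵢ|^{1+γ}) ≤ M < ∞ (M > 1, γ ∈ (0,1)), and let s_M ≥ σ_max(A). Let q ∈ ℝⁿ with q ∉ (ΓX)_ε for some ε ∈ (0,1), let x⁽¹⁾,…,x⁽ᴺ⁾ be i.i.d. samples of X, and let Y be uniformly distributed on the sample. If N ≥ max{ (8 M n s_M^{1+γ} / (ε² δ))^{3/γ}, (8 M n s_M^{1+γ} / ε)^{1/2 + 1/γ} }, then with probability at least 1 − δ over the sample, q ∉ ΓY. -/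

import Mathlib

open MeasureTheory ProbabilityTheory Matrix
open scoped RealInnerProductSpace ENNReal

/-- The centroid body of a distribution `μ` on `ℝⁿ`: the (compact, convex) set whose support
function is `u ↦ E|⟨u,X⟩|`, realized as the intersection of the corresponding halfspaces. -/
noncomputable def centroidBody {n : ℕ} (μ : Measure (EuclideanSpace ℝ (Fin n))) :
    Set (EuclideanSpace ℝ (Fin n)) :=
  {y | ∀ u : EuclideanSpace ℝ (Fin n), ⟪y, u⟫ ≤ ∫ x, |⟪x, u⟫| ∂μ}

/-- The empirical (uniform) distribution of a finite tuple of points of `ℝⁿ`. -/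
noncomputable def empiricalMeasure {n N : ℕ} (x : Fin N → EuclideanSpace ℝ (Fin n)) :
    Measure (EuclideanSpace ℝ (Fin n)) :=
  (N : ℝ≥0∞)⁻¹ • ∑ i, Measure.dirac (x i)

/-- The spectral norm (largest singular value) of a square real matrix. -/
noncomputable def spectralNorm' {n : ℕ} (M : Matrix (Fin n) (Fin n) ℝ) : ℝ :=
  ‖(Matrix.toEuclideanCLM (𝕜 := ℝ) M : EuclideanSpace ℝ (Fin n) →L[ℝ] EuclideanSpace ℝ (Fin n))‖

/-!
Since `ΓX` is the closed convex set whose support function is the seminorm `u ↦ E|⟨X, u⟩|`,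
a point `q` at distance more than `ε` from it is separated by a unit vector `u`:
`E|⟨X, u⟩| + ε < ⟨q, u⟩`. If `q ∈ ΓY`, the i.i.d. variables `Zₖ = |⟨x⁽ᵏ⁾, u⟩|` therefore have
an empirical mean exceeding their expectation by `ε`. Since `⟨AS, u⟩ = ⟨S, Aᵀu⟩` and
`‖Aᵀu‖ ≤ s_M`, Hölder's inequality gives `E Z^{1+γ} ≤ M n s_M^{1+γ}`. Truncating the `Zₖ` at
`t = Nε`, Chebyshev's inequality for the truncated sum and Markov's inequality for the event that
some `Zₖ` exceeds `t` each contribute at most `N E Z^{1+γ} / t^{1+γ}`, and the bound on `N` makes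
their sum at most `δ`.
-/

namespace Seminorm

variable {E : Type*} [NormedAddCommGroup E] [InnerProductSpace ℝ E]

def supportBody (p : Seminorm ℝ E) : Set E := {y | ∀ v, ⟪y, v⟫ ≤ p v}

theorem zero_mem_supportBody (p : Seminorm ℝ E) : (0 : E) ∈ p.supportBody := fun v => by
  simp

theorem isClosed_supportBody (p : Seminorm ℝ E) : IsClosed p.supportBody := by
  simp only [supportBody, Set.ofPred_forall]
  exact isClosed_iInter fun v => isClosed_le (continuous_id.inner continuous_const) continuous_const

theorem convex_supportBody (p : Seminorm ℝ E) : Convex ℝ p.supportBody := by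
  intro a ha b hb s t hs ht hst v
  rw [inner_add_left, real_inner_smul_left, real_inner_smul_left]
  calc s * ⟪a, v⟫ + t * ⟪b, v⟫ ≤ s * p v + t * p v := by gcongr; exacts [ha v, hb v]
    _ = p v := by rw [← add_mul, hst, one_mul]

theorem exists_mem_supportBody_inner_eq [FiniteDimensional ℝ E] (p : Seminorm ℝ E) (u : E) :
    ∃ y ∈ p.supportBody, ⟪y, u⟫ = p u := by
  have hker : ∀ c : ℝ, c • u = 0 → RingHom.id ℝ c • p u = 0 := fun c hc => by
    have := congrArg p hc
    rw [map_smul_eq_mul, map_zero, mul_eq_zero, norm_eq_zero] at this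
    rcases this with h | h <;> simp [h]
  obtain ⟨g, hgf, hgp⟩ :=
    exists_extension_of_le_sublinear (LinearPMap.mkSpanSingleton' u (p u) hker) p
      (fun c hc x => by rw [map_smul_eq_mul, Real.norm_of_nonneg hc.le]) (map_add_le_add p) (by
        rintro ⟨x, hx⟩
        obtain ⟨c, rfl⟩ := Submodule.mem_span_singleton.mp hx
        rw [LinearPMap.mkSpanSingleton'_apply, map_smul_eq_mul, RingHom.id_apply, smul_eq_mul]
        exact mul_le_mul_of_nonneg_right (le_abs_self c) (apply_nonneg p u))
  let y := (InnerProductSpace.toDual ℝ E).symm (LinearMap.toContinuousLinearMap g)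
  have hy : ∀ v, ⟪y, v⟫ = g v := fun v => by
    simp [y, InnerProductSpace.toDual_symm_apply]
  refine ⟨y, fun v => (hy v).trans_le (hgp v), ?_⟩
  rw [hy, hgf ⟨u, Submodule.mem_span_singleton_self u⟩]
  exact LinearPMap.mkSpanSingleton'_apply_self _ _ _ _

theorem exists_norm_eq_one_add_lt_inner_of_notMem_cthickening [FiniteDimensional ℝ E]
    (p : Seminorm ℝ E) {q : E} {ε : ℝ} (hq : q ∉ Metric.cthickening ε p.supportBody) :
    ∃ u : E, ‖u‖ = 1 ∧ p u + ε < ⟪q, u⟫ := by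
  -- `x` is the point of the body nearest to `q`; the point `y` where the support function is
  -- attained in the direction `q - x` lies behind the supporting hyperplane at `x`.
  obtain ⟨x, hxK, hx⟩ := exists_norm_eq_iInf_of_complete_convex ⟨0, p.zero_mem_supportBody⟩
    p.isClosed_supportBody.isComplete p.convex_supportBody q
  have hobtuse := (norm_eq_iInf_iff_real_inner_le_zero p.convex_supportBody hxK).mp hx
  have hdist : ε < ‖q - x‖ ∧ 0 < ‖q - x‖ := by
    rw [Metric.mem_cthickening_iff, not_le] at hq
    rw [← ENNReal.ofReal_lt_ofReal_iff', ← dist_eq_norm, ← edist_dist]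
    exact hq.trans_le (Metric.infEDist_le_edist_of_mem hxK)
  set d := ‖q - x‖
  obtain ⟨y, hyK, hyu⟩ := p.exists_mem_supportBody_inner_eq (d⁻¹ • (q - x))
  refine ⟨d⁻¹ • (q - x), ?_, ?_⟩
  · rw [norm_smul, norm_inv, norm_norm, inv_mul_cancel₀ hdist.2.ne']
  · have hyx : ⟪y, q - x⟫ + d ^ 2 ≤ ⟪q, q - x⟫ := by
      have := hobtuse y hyK
      rw [← real_inner_self_eq_norm_sq, inner_sub_left q x]
      rw [inner_sub_right] at this
      linarith [real_inner_comm (q - x) y, real_inner_comm (q - x) x]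
    rw [← hyu, real_inner_smul_right, real_inner_smul_right]
    calc d⁻¹ * ⟪y, q - x⟫ + ε < d⁻¹ * ⟪y, q - x⟫ + d := by linarith [hdist.1]
      _ = d⁻¹ * (⟪y, q - x⟫ + d ^ 2) := by field_simp
      _ ≤ d⁻¹ * ⟪q, q - x⟫ := by gcongr

end Seminorm

theorem exists_norm_eq_one_integral_add_lt_inner_of_notMem_cthickening {n : ℕ}
    {μ : Measure (EuclideanSpace ℝ (Fin n))} (hμ : ∀ u, Integrable (fun x => |⟪x, u⟫|) μ)
    {q : EuclideanSpace ℝ (Fin n)} {ε : ℝ} (hq : q ∉ Metric.cthickening ε (centroidBody μ)) :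
    ∃ u, ‖u‖ = 1 ∧ ∫ x, |⟪x, u⟫| ∂μ + ε < ⟪q, u⟫ := by
  let p : Seminorm ℝ (EuclideanSpace ℝ (Fin n)) := Seminorm.of (fun u => ∫ x, |⟪x, u⟫| ∂μ)
    (fun u v => by
      rw [← integral_add (hμ u) (hμ v)]
      refine integral_mono (hμ _) ((hμ u).add (hμ v)) fun x => ?_
      simp only [inner_add_right, abs_add_le])
    (fun c u => by simp_rw [real_inner_smul_right, abs_mul, integral_const_mul, Real.norm_eq_abs])
  exact p.exists_norm_eq_one_add_lt_inner_of_notMem_cthickening hq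

theorem integral_empiricalMeasure {n N : ℕ} (x : Fin N → EuclideanSpace ℝ (Fin n))
    (f : EuclideanSpace ℝ (Fin n) → ℝ) :
    ∫ y, f y ∂empiricalMeasure x = (N : ℝ)⁻¹ * ∑ k, f (x k) := by
  rw [empiricalMeasure, integral_smul_measure,
    integral_finsetSum_measure fun k _ => integrable_dirac enorm_lt_top]
  simp [integral_dirac]

theorem Matrix.inner_toEuclideanLin_left {𝕜 m n : Type*} [RCLike 𝕜] [Fintype m] [Fintype n]
    [DecidableEq m] [DecidableEq n] (A : Matrix m n 𝕜) (x : EuclideanSpace 𝕜 n)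
    (y : EuclideanSpace 𝕜 m) :
    inner 𝕜 (toEuclideanLin A x) y = inner 𝕜 x (toEuclideanLin Aᴴ y) := by
  rw [toEuclideanLin_conjTranspose_eq_adjoint, LinearMap.adjoint_inner_right]

theorem Matrix.norm_toEuclideanLin_conjTranspose_apply_le {n : ℕ}
    (A : Matrix (Fin n) (Fin n) ℝ) (x : EuclideanSpace ℝ (Fin n)) :
    ‖toEuclideanLin Aᴴ x‖ ≤ spectralNorm' A * ‖x‖ := by
  calc ‖toEuclideanLin Aᴴ x‖ = ‖toEuclideanCLM (𝕜 := ℝ) (star A) x‖ := rfl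
    _ ≤ ‖toEuclideanCLM (𝕜 := ℝ) (star A)‖ * ‖x‖ := ContinuousLinearMap.le_opNorm _ x
    _ = spectralNorm' A * ‖x‖ := by
        rw [map_star, ContinuousLinearMap.star_eq_adjoint, LinearIsometryEquiv.norm_map]
        rfl

namespace EuclideanSpace

variable {ι : Type*} [Fintype ι]

theorem abs_inner_le_sum_abs_mul_abs (v w : EuclideanSpace ℝ ι) :
    |⟪v, w⟫| ≤ ∑ i, |v i| * |w i| := by
  rw [PiLp.inner_apply]
  refine (Finset.abs_sum_le_sum_abs _ _).trans_eq (Finset.sum_congr rfl fun i _ => ?_)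
  simp [abs_mul, mul_comm]

theorem sum_abs_rpow_le_norm_rpow (w : EuclideanSpace ℝ ι) {q : ℝ} (hq : 2 ≤ q) :
    ∑ i, |w i| ^ q ≤ ‖w‖ ^ q := by
  have hsplit : ∀ a : ℝ, 0 ≤ a → a ^ q = a ^ (q - 2) * a ^ 2 := fun a ha => by
    rw [← Real.rpow_two, ← Real.rpow_add' ha (by linarith), sub_add_cancel]
  calc ∑ i, |w i| ^ q = ∑ i, |w i| ^ (q - 2) * |w i| ^ 2 :=
        Finset.sum_congr rfl fun i _ => hsplit _ (abs_nonneg _)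
    _ ≤ ∑ i, ‖w‖ ^ (q - 2) * |w i| ^ 2 := by
        gcongr with i
        exact PiLp.norm_apply_le w i
    _ = ‖w‖ ^ q := by
        rw [← Finset.mul_sum, hsplit _ (norm_nonneg w), EuclideanSpace.norm_sq_eq]
        simp only [Real.norm_eq_abs]

theorem abs_inner_rpow_le (v w : EuclideanSpace ℝ ι) {p : ℝ} (hp₁ : 1 < p) (hp₂ : p ≤ 2) :
    |⟪v, w⟫| ^ p ≤ ‖w‖ ^ p * ∑ i, |v i| ^ p := by
  set q := p.conjExponent
  have hpq : p.HolderConjugate q := .conjExponent hp₁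
  have hq : 2 ≤ q := by
    rw [show q = p / (p - 1) from rfl, le_div_iff₀ (by linarith)]
    linarith
  have hvp : 0 ≤ ∑ i, |v i| ^ p := by positivity
  have hinner : |⟪v, w⟫| ≤ (∑ i, |v i| ^ p) ^ (1 / p) * ‖w‖ :=
    calc |⟪v, w⟫| ≤ ∑ i, |v i| * |w i| := abs_inner_le_sum_abs_mul_abs v w
      _ ≤ (∑ i, |v i| ^ p) ^ (1 / p) * (∑ i, |w i| ^ q) ^ (1 / q) := by
          simpa using Real.inner_le_Lp_mul_Lq Finset.univ (fun i => |v i|) (fun i => |w i|) hpq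
      _ ≤ (∑ i, |v i| ^ p) ^ (1 / p) * (‖w‖ ^ q) ^ (1 / q) := by
          gcongr
          exact sum_abs_rpow_le_norm_rpow w hq
      _ = (∑ i, |v i| ^ p) ^ (1 / p) * ‖w‖ := by
          rw [← Real.rpow_mul (norm_nonneg w), mul_one_div_cancel hpq.symm.ne_zero, Real.rpow_one]
  calc |⟪v, w⟫| ^ p ≤ ((∑ i, |v i| ^ p) ^ (1 / p) * ‖w‖) ^ p := by gcongr
    _ = ‖w‖ ^ p * ∑ i, |v i| ^ p := by
        rw [Real.mul_rpow (by positivity) (norm_nonneg w), ← Real.rpow_mul hvp,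
          one_div_mul_cancel hpq.ne_zero, Real.rpow_one, mul_comm]

end EuclideanSpace

section Moments

variable {Ω ι : Type*} [Fintype ι] [MeasurableSpace Ω] {μ : Measure Ω}
  {X : Ω → EuclideanSpace ℝ ι}

theorem integrable_abs_inner (hX : Measurable X) (hint : ∀ i, Integrable (fun ω => |X ω i|) μ)
    (w : EuclideanSpace ℝ ι) : Integrable (fun ω => |⟪X ω, w⟫|) μ := by
  refine (integrable_finsetSum Finset.univ fun i _ => (hint i).mul_const |w i|).mono'
    (by fun_prop) (Filter.Eventually.of_forall fun ω => ?_)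
  rw [Real.norm_eq_abs, abs_abs]
  exact EuclideanSpace.abs_inner_le_sum_abs_mul_abs (X ω) w

theorem integrable_abs_inner_rpow {p : ℝ} (hp₁ : 1 < p) (hp₂ : p ≤ 2) (hX : Measurable X)
    (hint : ∀ i, Integrable (fun ω => |X ω i| ^ p) μ) (w : EuclideanSpace ℝ ι) :
    Integrable (fun ω => |⟪X ω, w⟫| ^ p) μ := by
  refine ((integrable_finsetSum Finset.univ fun i _ => hint i).const_mul (‖w‖ ^ p)).mono'
    (by fun_prop : Measurable fun ω => |⟪X ω, w⟫| ^ p).aestronglyMeasurable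
    (Filter.Eventually.of_forall fun ω => ?_)
  rw [Real.norm_of_nonneg (by positivity)]
  simpa using EuclideanSpace.abs_inner_rpow_le (X ω) w hp₁ hp₂

theorem integral_abs_inner_rpow_le {p M : ℝ} (hp₁ : 1 < p) (hp₂ : p ≤ 2) (hX : Measurable X)
    (hint : ∀ i, Integrable (fun ω => |X ω i| ^ p) μ) (hmom : ∀ i, ∫ ω, |X ω i| ^ p ∂μ ≤ M)
    (w : EuclideanSpace ℝ ι) :
    ∫ ω, |⟪X ω, w⟫| ^ p ∂μ ≤ M * Fintype.card ι * ‖w‖ ^ p := by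
  have hsum : ∑ i, ∫ ω, |X ω i| ^ p ∂μ ≤ Fintype.card ι * M := by
    simpa using Finset.sum_le_sum fun i (_ : i ∈ Finset.univ) => hmom i
  calc ∫ ω, |⟪X ω, w⟫| ^ p ∂μ ≤ ∫ ω, ‖w‖ ^ p * ∑ i, |X ω i| ^ p ∂μ :=
        integral_mono (integrable_abs_inner_rpow hp₁ hp₂ hX hint w)
          ((integrable_finsetSum Finset.univ fun i _ => hint i).const_mul _)
          fun ω => by simpa using EuclideanSpace.abs_inner_rpow_le (X ω) w hp₁ hp₂
    _ = ‖w‖ ^ p * ∑ i, ∫ ω, |X ω i| ^ p ∂μ := by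
        rw [integral_const_mul, integral_finsetSum _ fun i _ => hint i]
    _ ≤ M * Fintype.card ι * ‖w‖ ^ p := by
        rw [mul_comm M, mul_comm _ (‖w‖ ^ p)]
        gcongr

end Moments

theorem min_sq_le_rpow_mul_rpow {z R p : ℝ} (hz : 0 ≤ z) (hR : 0 ≤ R) (hp₀ : 0 ≤ p)
    (hp₂ : p ≤ 2) : min z R ^ 2 ≤ R ^ (2 - p) * z ^ p := by
  have hm : 0 ≤ min z R := le_min hz hR
  calc min z R ^ 2 = min z R ^ (2 - p) * min z R ^ p := by
        rw [← Real.rpow_add' hm (by norm_num), sub_add_cancel, Real.rpow_two]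
    _ ≤ R ^ (2 - p) * z ^ p := by
        gcongr
        exacts [min_le_right z R, min_le_left z R]

theorem setOf_add_le_sum_subset {Ω : Type*} {N : ℕ} (Z : Fin N → Ω → ℝ) {c e t : ℝ} (hec : e ≤ c) :
    {ω | c + t ≤ ∑ k, Z k ω} ⊆
      {ω | t ≤ |∑ k, min (Z k ω) t - e|} ∪ ⋃ k, {ω | t < Z k ω} := by
  intro ω hω
  by_cases hbig : ∃ k, t < Z k ω
  · exact Or.inr (Set.mem_iUnion.2 hbig)
  · push Not at hbig
    have hω : c + t ≤ ∑ k, Z k ω := hω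
    refine Or.inl (show t ≤ |_| from le_trans ?_ (le_abs_self _))
    simp only [min_eq_left (hbig _)]
    linarith

section Deviation

variable {Ω : Type*} [MeasurableSpace Ω] {μ : Measure Ω}

theorem one_sub_measure_le_measure_compl [IsProbabilityMeasure μ] (s : Set Ω) :
    1 - μ s ≤ μ sᶜ := by
  rw [tsub_le_iff_left, ← measure_univ (μ := μ)]
  exact measure_univ_le_add_compl s

theorem measure_lt_le_integral_rpow_div [IsFiniteMeasure μ] {Z : Ω → ℝ} (hZ₀ : ∀ ω, 0 ≤ Z ω)
    {R p : ℝ} (hR : 0 < R) (hp : 0 ≤ p) (hZ : Integrable (fun ω => Z ω ^ p) μ) :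
    μ {ω | R < Z ω} ≤ ENNReal.ofReal ((∫ ω, Z ω ^ p ∂μ) / R ^ p) := by
  have hmarkov := mul_meas_ge_le_integral_of_nonneg
    (Filter.Eventually.of_forall fun ω => Real.rpow_nonneg (hZ₀ ω) p) hZ (R ^ p)
  calc μ {ω | R < Z ω} ≤ μ {ω | R ^ p ≤ Z ω ^ p} :=
        measure_mono fun ω hω => Real.rpow_le_rpow hR.le (le_of_lt hω) hp
    _ = ENNReal.ofReal (μ.real {ω | R ^ p ≤ Z ω ^ p}) :=
        (ofReal_measureReal (measure_ne_top _ _)).symm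
    _ ≤ ENNReal.ofReal ((∫ ω, Z ω ^ p ∂μ) / R ^ p) := by
        gcongr
        rwa [le_div_iff₀' (by positivity)]

namespace ProbabilityTheory

variable [IsProbabilityMeasure μ]

theorem iIndepFun.measure_le_abs_sum_min_sub_integral_le {N : ℕ} {Z : Fin N → Ω → ℝ}
    (hZ : ∀ k, Measurable (Z k)) (hindep : iIndepFun Z μ) (hZ₀ : ∀ k ω, 0 ≤ Z k ω)
    {p B t : ℝ} (hp₀ : 0 ≤ p) (hp₂ : p ≤ 2) (ht : 0 < t)
    (hint : ∀ k, Integrable (fun ω => Z k ω ^ p) μ) (hmom : ∀ k, ∫ ω, Z k ω ^ p ∂μ ≤ B) :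
    μ {ω | t ≤ |∑ k, min (Z k ω) t - ∫ ω', ∑ k, min (Z k ω') t ∂μ|} ≤
      ENNReal.ofReal (N * B / t ^ p) := by
  set W : Fin N → Ω → ℝ := fun k ω => min (Z k ω) t
  have hWmeas : ∀ k, Measurable (W k) := fun k => (hZ k).min measurable_const
  have hW₂ : ∀ k, MemLp (W k) 2 μ := fun k =>
    MemLp.of_bound (hWmeas k).aestronglyMeasurable t (Filter.Eventually.of_forall fun ω => by
      rw [Real.norm_of_nonneg (le_min (hZ₀ k ω) ht.le)]
      exact min_le_right _ _)
  have hvar : ∀ k, variance (W k) μ ≤ t ^ (2 - p) * B := fun k =>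
    calc variance (W k) μ ≤ ∫ ω, W k ω ^ 2 ∂μ :=
          variance_le_expectation_sq (hWmeas k).aestronglyMeasurable
      _ ≤ ∫ ω, t ^ (2 - p) * Z k ω ^ p ∂μ :=
          integral_mono (hW₂ k).integrable_sq ((hint k).const_mul _) fun ω =>
            min_sq_le_rpow_mul_rpow (hZ₀ k ω) ht.le hp₀ hp₂
      _ ≤ t ^ (2 - p) * B := by
          rw [integral_const_mul]
          gcongr
          exact hmom k
  have hsum : ∑ k, W k = fun ω => ∑ k, min (Z k ω) t := by
    ext ω
    simp [W]
  have hcheb :=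
    meas_ge_le_variance_div_sq (μ := μ) (memLp_finsetSum' Finset.univ fun k _ => hW₂ k) ht
  rw [hsum] at hcheb
  refine hcheb.trans (ENNReal.ofReal_le_ofReal ?_)
  rw [← hsum, IndepFun.variance_sum (fun k _ => hW₂ k)
    fun i _ j _ hij => (hindep.comp (fun k => fun z => min z t)
      fun k => measurable_id.min measurable_const).indepFun hij]
  calc (∑ k, variance (W k) μ) / t ^ 2 ≤ (N * (t ^ (2 - p) * B)) / t ^ 2 := by
        gcongr
        simpa using Finset.sum_le_sum fun k (_ : k ∈ Finset.univ) => hvar k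
    _ = N * B / t ^ p := by
        rw [Real.rpow_sub ht, Real.rpow_two]
        field_simp

theorem iIndepFun.measure_le_sum_le_of_integral_rpow_le {N : ℕ} {Z : Fin N → Ω → ℝ}
    (hZ : ∀ k, Measurable (Z k)) (hindep : iIndepFun Z μ) (hZ₀ : ∀ k ω, 0 ≤ Z k ω)
    {p m B t : ℝ} (hp₀ : 0 ≤ p) (hp₂ : p ≤ 2) (ht : 0 < t)
    (hint₁ : ∀ k, Integrable (Z k) μ) (hmean : ∀ k, ∫ ω, Z k ω ∂μ ≤ m)
    (hint : ∀ k, Integrable (fun ω => Z k ω ^ p) μ) (hmom : ∀ k, ∫ ω, Z k ω ^ p ∂μ ≤ B) :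
    μ {ω | N * m + t ≤ ∑ k, Z k ω} ≤ ENNReal.ofReal (2 * N * B / t ^ p) := by
  obtain rfl | hN := N.eq_zero_or_pos
  · simp [ht.not_ge]
  have hB : 0 ≤ B :=
    (integral_nonneg fun ω => Real.rpow_nonneg (hZ₀ ⟨0, hN⟩ ω) p).trans (hmom ⟨0, hN⟩)
  have hmeanW : ∫ ω, ∑ k, min (Z k ω) t ∂μ ≤ N * m := by
    have hW : ∀ k, Integrable (fun ω => min (Z k ω) t) μ := fun k =>
      (hint₁ k).mono ((hZ k).min measurable_const).aestronglyMeasurable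
        (Filter.Eventually.of_forall fun ω => by
          simp only [Real.norm_eq_abs, abs_of_nonneg (hZ₀ k ω),
            abs_of_nonneg (le_min (hZ₀ k ω) ht.le), min_le_left])
    rw [integral_finsetSum _ fun k _ => hW k]
    calc ∑ k, ∫ ω, min (Z k ω) t ∂μ ≤ ∑ _k : Fin N, m := Finset.sum_le_sum fun k _ =>
          (integral_mono (hW k) (hint₁ k) fun ω => min_le_left _ _).trans (hmean k)
      _ = N * m := by simp
  calc μ {ω | N * m + t ≤ ∑ k, Z k ω}
      ≤ μ {ω | t ≤ |∑ k, min (Z k ω) t - ∫ ω', ∑ k, min (Z k ω') t ∂μ|} +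
          ∑ k, μ {ω | t < Z k ω} :=
        (measure_mono (setOf_add_le_sum_subset Z hmeanW)).trans ((measure_union_le _ _).trans
          (add_le_add le_rfl (measure_iUnion_fintype_le _ _)))
    _ ≤ ENNReal.ofReal (N * B / t ^ p) + ∑ _k : Fin N, ENNReal.ofReal (B / t ^ p) := by
        gcongr with k
        · exact hindep.measure_le_abs_sum_min_sub_integral_le hZ hZ₀ hp₀ hp₂ ht hint hmom
        · exact (measure_lt_le_integral_rpow_div (hZ₀ k) ht hp₀ (hint k)).trans
            (ENNReal.ofReal_le_ofReal (by gcongr; exact hmom k))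
    _ = ENNReal.ofReal (2 * N * B / t ^ p) := by
        rw [Finset.sum_const, Finset.card_univ, Fintype.card_fin, nsmul_eq_mul,
          ← ENNReal.ofReal_natCast, ← ENNReal.ofReal_mul (Nat.cast_nonneg N),
          ← ENNReal.ofReal_add (by positivity) (by positivity)]
        ring_nf

theorem iIndepFun.measure_card_mul_integral_add_le_sum_le {E : Type*} [MeasurableSpace E]
    {N : ℕ} {s : Fin N → Ω → E} {S : Ω → E} (hiid : iIndepFun s μ) (hs : ∀ k, Measurable (s k))
    (hident : ∀ k, IdentDistrib (s k) S μ μ) {F : E → ℝ} (hF : Measurable F)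
    (hF₀ : ∀ x, 0 ≤ F x) {p B t : ℝ} (hp₀ : 0 ≤ p) (hp₂ : p ≤ 2) (ht : 0 < t)
    (hint₁ : Integrable (fun ω => F (S ω)) μ) (hint : Integrable (fun ω => F (S ω) ^ p) μ)
    (hmom : ∫ ω, F (S ω) ^ p ∂μ ≤ B) :
    μ {ω | N * ∫ ω', F (S ω') ∂μ + t ≤ ∑ k, F (s k ω)} ≤
      ENNReal.ofReal (2 * N * B / t ^ p) := by
  have hFp : Measurable fun x => F x ^ p := hF.pow_const p
  exact (hiid.comp (fun _ => F) fun _ => hF).measure_le_sum_le_of_integral_rpow_le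
    (fun k => hF.comp (hs k)) (fun k ω => hF₀ _) hp₀ hp₂ ht
    (fun k => ((hident k).comp hF).integrable_iff.2 hint₁)
    (fun k => ((hident k).comp hF).integral_eq.le)
    (fun k => ((hident k).comp hFp).integrable_iff.2 hint)
    (fun k => ((hident k).comp hFp).integral_eq.trans_le hmom)

end ProbabilityTheory

theorem measure_mem_centroidBody_empiricalMeasure_le [IsProbabilityMeasure μ] {n N : ℕ}
    {Y : Fin N → Ω → EuclideanSpace ℝ (Fin n)} {Y₀ : Ω → EuclideanSpace ℝ (Fin n)}
    (hiid : iIndepFun Y μ) (hY : ∀ k, Measurable (Y k)) (hident : ∀ k, IdentDistrib (Y k) Y₀ μ μ)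
    {q u : EuclideanSpace ℝ (Fin n)} {ε p B : ℝ} (hε : 0 < ε) (hp₀ : 0 ≤ p) (hp₂ : p ≤ 2)
    (hint₁ : Integrable (fun ω => |⟪Y₀ ω, u⟫|) μ)
    (hint : Integrable (fun ω => |⟪Y₀ ω, u⟫| ^ p) μ) (hmom : ∫ ω, |⟪Y₀ ω, u⟫| ^ p ∂μ ≤ B)
    (hsep : ∫ ω, |⟪Y₀ ω, u⟫| ∂μ + ε < ⟪q, u⟫) :
    μ {ω | q ∈ centroidBody (empiricalMeasure fun k => Y k ω)} ≤
      ENNReal.ofReal (2 * N * B / (N * ε) ^ p) := by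
  have hm₀ : 0 ≤ ∫ ω, |⟪Y₀ ω, u⟫| ∂μ := integral_nonneg fun ω => abs_nonneg _
  obtain rfl | hN := N.eq_zero_or_pos
  · refine (measure_mono (t := ∅) fun ω hω => ?_).trans (by simp)
    have hq : ⟪q, u⟫ ≤ 0 := by simpa [integral_empiricalMeasure] using hω u
    linarith
  have hN' : (0 : ℝ) < N := by exact_mod_cast hN
  refine (measure_mono fun ω hω => ?_).trans (hiid.measure_card_mul_integral_add_le_sum_le hY
    hident (F := fun x => |⟪x, u⟫|) (by fun_prop) (fun x => abs_nonneg _) hp₀ hp₂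
    (by positivity) hint₁ hint hmom)
  have hq := (le_inv_mul_iff₀ hN').1 (by simpa only [integral_empiricalMeasure] using hω u)
  show (N : ℝ) * _ + N * ε ≤ _
  nlinarith

end Deviation

theorem two_mul_mul_div_mul_rpow_le {N : ℕ} {B γ ε δ : ℝ} (hB : 0 ≤ B) (hγ₀ : 0 < γ)
    (hγ₁ : γ ≤ 1) (hε₀ : 0 < ε) (hε₁ : ε ≤ 1) (hδ : 0 < δ)
    (hN : (8 * B / (ε ^ 2 * δ)) ^ (3 / γ) ≤ N) : 2 * N * B / (N * ε) ^ (1 + γ) ≤ δ := by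
  obtain rfl | hN₀ := N.eq_zero_or_pos
  · simp [hδ.le]
  have hN₁ : (1 : ℝ) ≤ N := by exact_mod_cast hN₀
  set t := 8 * B / (ε ^ 2 * δ)
  have ht₀ : 0 ≤ t := by positivity
  have htN : t ≤ N ^ γ := by
    rcases le_or_gt t 1 with ht₁ | ht₁
    · exact ht₁.trans (Real.one_le_rpow hN₁ hγ₀.le)
    · calc t ≤ t ^ (3 : ℝ) := Real.self_le_rpow_of_one_le ht₁.le (by norm_num)
        _ = (t ^ (3 / γ)) ^ γ := by rw [← Real.rpow_mul ht₀, div_mul_cancel₀ _ hγ₀.ne']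
        _ ≤ N ^ γ := by gcongr
  have hε : ε ^ 2 ≤ ε ^ (1 + γ) := by
    rw [← Real.rpow_two]
    exact Real.rpow_le_rpow_of_exponent_ge hε₀ hε₁ (by linarith)
  have hpow : N * t * ε ^ 2 ≤ (N * ε) ^ (1 + γ) := by
    rw [Real.mul_rpow (by linarith) hε₀.le, Real.rpow_add (by linarith), Real.rpow_one,
      mul_assoc, mul_assoc]
    gcongr
  have ht : N * t * ε ^ 2 * δ = 8 * N * B := by
    simp only [t]
    field_simp
  rw [div_le_iff₀ (by positivity)]
  nlinarith [mul_le_mul_of_nonneg_right hpow hδ.le]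

theorem empirical_centroid_oracle_no_case_general
    {n : ℕ} {Ω : Type*} [MeasureSpace Ω] [IsProbabilityMeasure (ℙ : Measure Ω)]
    (γ M s_M : ℝ) (hγ : γ ∈ Set.Ioo (0 : ℝ) 1) (hM : 1 < M)
    (S : Ω → EuclideanSpace ℝ (Fin n)) (hS : Measurable S)
    (hint : ∀ i, Integrable (fun ω => |S ω i|) ℙ)
    (hintmom : ∀ i, Integrable (fun ω => |S ω i| ^ (1 + γ)) ℙ)
    (hmom : ∀ i, ∫ ω, |S ω i| ^ (1 + γ) ≤ M)
    (A : Matrix (Fin n) (Fin n) ℝ) (hsM : spectralNorm' A ≤ s_M)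
    (X : Ω → EuclideanSpace ℝ (Fin n))
    (hX : X = fun ω => Matrix.toEuclideanLin A (S ω))
    (q : EuclideanSpace ℝ (Fin n)) (ε δ : ℝ)
    (hε : ε ∈ Set.Ioo (0 : ℝ) 1) (hδ : δ ∈ Set.Ioo (0 : ℝ) 1)
    (hq : q ∉ Metric.cthickening ε (centroidBody (Measure.map X ℙ)))
    (N : ℕ) (s : Fin N → Ω → EuclideanSpace ℝ (Fin n))
    (hs : ∀ k, Measurable (s k))
    (hiid : iIndepFun s ℙ)
    (hident : ∀ k, IdentDistrib (s k) S ℙ ℙ)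
    (hN : max ((8 * M * n * s_M ^ (1 + γ) / (ε ^ 2 * δ)) ^ (3 / γ))
            ((8 * M * n * s_M ^ (1 + γ) / ε) ^ ((1 : ℝ) / 2 + 1 / γ)) ≤ (N : ℝ)) :
    1 - ENNReal.ofReal δ ≤
      ℙ {ω | q ∉ centroidBody
          (empiricalMeasure fun k => Matrix.toEuclideanLin A (s k ω))} := by
  obtain ⟨hγ₀, hγ₁⟩ := hγ
  have hp₁ : 1 < 1 + γ := by linarith
  have hp₂ : 1 + γ ≤ 2 := by linarith
  subst hX
  have hA : Measurable (toEuclideanLin A) :=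
    (toEuclideanLin A).continuous_of_finiteDimensional.measurable
  have hAS : Measurable fun ω => toEuclideanLin A (S ω) := hA.comp hS
  have hint₁ : ∀ u, Integrable (fun ω => |⟪toEuclideanLin A (S ω), u⟫|) ℙ := fun u => by
    simpa only [inner_toEuclideanLin_left] using integrable_abs_inner hS hint _
  obtain ⟨u, hu, hsep⟩ := exists_norm_eq_one_integral_add_lt_inner_of_notMem_cthickening
    (fun u => (integrable_map_measure (by fun_prop) hAS.aemeasurable).2 (hint₁ u)) hq
  rw [integral_map hAS.aemeasurable (by fun_prop)] at hsep
  have hw : ‖toEuclideanLin Aᴴ u‖ ≤ s_M :=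
    (norm_toEuclideanLin_conjTranspose_apply_le A u).trans (by rwa [hu, mul_one])
  have hM₀ : 0 ≤ M * n := mul_nonneg (by linarith) n.cast_nonneg
  have hmomAS : ∫ ω, |⟪toEuclideanLin A (S ω), u⟫| ^ (1 + γ) ≤ M * n * s_M ^ (1 + γ) := by
    simp_rw [inner_toEuclideanLin_left]
    refine (integral_abs_inner_rpow_le hp₁ hp₂ hS hintmom hmom _).trans ?_
    rw [Fintype.card_fin]
    exact mul_le_mul_of_nonneg_left (Real.rpow_le_rpow (norm_nonneg _) hw (by linarith)) hM₀
  have hbad := measure_mem_centroidBody_empiricalMeasure_le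
    (Y := fun k ω => toEuclideanLin A (s k ω)) (Y₀ := fun ω => toEuclideanLin A (S ω))
    (hiid.comp (fun _ => toEuclideanLin A) fun _ => hA) (fun k => hA.comp (hs k))
    (fun k => (hident k).comp hA) hε.1 (by linarith) hp₂ (hint₁ u)
    (by simpa only [inner_toEuclideanLin_left] using
      integrable_abs_inner_rpow hp₁ hp₂ hS hintmom _) hmomAS hsep
  have hnum := two_mul_mul_div_mul_rpow_le (N := N)
    (mul_nonneg hM₀ (Real.rpow_nonneg ((norm_nonneg _).trans hw) _)) hγ₀ hγ₁.le hε.1 hε.2.le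
    hδ.1 (by simpa only [mul_assoc] using (le_max_left _ _).trans hN)
  calc 1 - ENNReal.ofReal δ ≤ 1 - ℙ {ω | q ∈ centroidBody
        (empiricalMeasure fun k => toEuclideanLin A (s k ω))} :=
        tsub_le_tsub_left (hbad.trans (ENNReal.ofReal_le_ofReal hnum)) 1
    _ ≤ _ := one_sub_measure_le_measure_compl _

/-- soundness of the empirical membership oracle for points outside
`(ΓX)_ε`.  In an ICA model `X = AS` with symmetric components, `E|Sᵢ| = 1`, `(1+γ)`-moments
bounded by `M`, and `σ_max(A) ≤ s_M`, if `q ∉ (ΓX)_ε` and `Y` is uniform on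
`N ≥ max{(8Mns_M^{1+γ}/(ε²δ))^{3/γ}, (8Mns_M^{1+γ}/ε)^{1/2+1/γ}}` i.i.d. samples of `X`, then
`q ∉ ΓY` with probability at least `1 − δ`. -/
theorem empirical_centroid_oracle_no_case
    {n : ℕ} {Ω : Type*} [MeasureSpace Ω] [IsProbabilityMeasure (ℙ : Measure Ω)]
    (γ M s_M : ℝ) (hγ : γ ∈ Set.Ioo (0 : ℝ) 1) (hM : 1 < M)
    (S : Ω → EuclideanSpace ℝ (Fin n)) (hS : Measurable S)
    (hindep : iIndepFun (fun i ω => S ω i) ℙ)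
    (hsym : ∀ i, Measure.map (fun ω => S ω i) ℙ = Measure.map (fun ω => -S ω i) ℙ)
    (hint : ∀ i, Integrable (fun ω => |S ω i|) ℙ)
    (hnorm : ∀ i, ∫ ω, |S ω i| = 1)
    (hintmom : ∀ i, Integrable (fun ω => |S ω i| ^ (1 + γ)) ℙ)
    (hmom : ∀ i, ∫ ω, |S ω i| ^ (1 + γ) ≤ M)
    (A : Matrix (Fin n) (Fin n) ℝ) (hA : IsUnit A) (hsM : spectralNorm' A ≤ s_M)
    (X : Ω → EuclideanSpace ℝ (Fin n))
    (hX : X = fun ω => Matrix.toEuclideanLin A (S ω))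
    (q : EuclideanSpace ℝ (Fin n)) (ε δ : ℝ)
    (hε : ε ∈ Set.Ioo (0 : ℝ) 1) (hδ : δ ∈ Set.Ioo (0 : ℝ) 1)
    (hq : q ∉ Metric.cthickening ε (centroidBody (Measure.map X ℙ)))
    (N : ℕ) (s : Fin N → Ω → EuclideanSpace ℝ (Fin n))
    (hs : ∀ k, Measurable (s k))
    (hiid : iIndepFun s ℙ)
    (hident : ∀ k, IdentDistrib (s k) S ℙ ℙ)
    (hN : max ((8 * M * n * s_M ^ (1 + γ) / (ε ^ 2 * δ)) ^ (3 / γ))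
            ((8 * M * n * s_M ^ (1 + γ) / ε) ^ ((1 : ℝ) / 2 + 1 / γ)) ≤ (N : ℝ)) :
    1 - ENNReal.ofReal δ ≤
      ℙ {ω | q ∉ centroidBody
          (empiricalMeasure fun k => Matrix.toEuclideanLin A (s k ω))} :=
  empirical_centroid_oracle_no_case_general γ M s_M hγ hM S hS hint hintmom hmom A hsM X hX q ε δ hε
    hδ hq N s hs hiid hident hN
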